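/- arXiv:1801.03134 — 5 statements merged into one kernel-verified Lean document; each statement's English description precedes it below -/
import Mathlib

section
/- Define γ⁺(n,i) as the number of divisors k of 2n with k(k + 2i + (-1)^(n+k+i))/2 = n, and γ⁻(n,i) as the number of divisors k of 2n with k(k + 2i - (-1)^(n+k+i))/2 = n. Then for every positive integer n and every i with 0 ≤ i ≤ n, γ⁺(n,i) · γ⁻(n,i) = 0. -/
/-- Number of positive divisors `k` of `2n` with `k(k + 2i + (-1)^(n+k+i))/2 = n`. -/
def gammaPlus (n i : ℕ) : ℕ :=
  ((2 * n).divisors.filter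
    (fun k : ℕ => (k : ℤ) * ((k : ℤ) + 2 * i + (-1 : ℤ) ^ ((n + k + i : ℕ))) = 2 * n)).card

/-- Number of positive divisors `k` of `2n` with `k(k + 2i - (-1)^(n+k+i))/2 = n`. -/
def gammaMinus (n i : ℕ) : ℕ :=
  ((2 * n).divisors.filter
    (fun k : ℕ => (k : ℤ) * ((k : ℤ) + 2 * i - (-1 : ℤ) ^ ((n + k + i : ℕ))) = 2 * n)).card

/-- Number of positive divisors of `n` congruent to `a` mod 4. -/
def d4 (a n : ℕ) : ℕ := (n.divisors.filter (fun d => d % 4 = a)).card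

/-!
Let `k` be counted by `γ⁺` and `m` by `γ⁻`, with signs `ε k = (-1)^(n+k+i)` and `ε m`; their ratio
is `(-1)^(k+m)`. If `k + m` is odd, `ε m = -ε k`, so `k` and `m` are positive roots of the same
quadratic `x(x + 2i + ε k) = 2n`, hence `k = m`, and `k + m` is even. If `k + m` is even,
`ε m = ε k =: ε` and subtracting the two equations gives `(k - m + ε)(k + m + 2i) = 2iε`; the
second factor exceeds `|2iε|`, so `m = k + ε` and `k + m` is odd.
-/

theorem eq_of_mul_add_eq_mul_add {R : Type*} [CommRing R] [IsDomain R] {k m c : R}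
    (hsum : k + m + c ≠ 0) (h : k * (k + c) = m * (m + c)) : k = m := by
  have hfactor : (k - m) * (k + m + c) = 0 := by linear_combination h
  exact sub_eq_zero.mp ((mul_eq_zero.mp hfactor).resolve_right hsum)

theorem Int.eq_add_of_mul_add_add_eq_mul_add_sub {k m i e : ℤ} (hk : 0 < k) (hm : 0 < m)
    (hi : 0 ≤ i) (he : |e| ≤ 1) (h : k * (k + 2 * i + e) = m * (m + 2 * i - e)) :
    m = k + e := by
  have hfactor : (k - m + e) * (k + m + 2 * i) = 2 * i * e := by linear_combination h
  have hbound : |2 * i * e| < k + m + 2 * i := by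
    rw [abs_mul, abs_of_nonneg (by positivity : (0 : ℤ) ≤ 2 * i)]
    nlinarith
  have hzero : 2 * i * e = 0 := Int.eq_zero_of_abs_lt_dvd (Dvd.intro_left _ hfactor) hbound
  rw [hzero] at hfactor
  linarith [(mul_eq_zero.mp hfactor).resolve_right (by positivity)]

theorem neg_one_pow_add_add_eq_mul {R : Type*} [Monoid R] [HasDistribNeg R] (a k m b : ℕ) :
    (-1 : R) ^ (a + m + b) = (-1) ^ (a + k + b) * (-1) ^ (k + m) := by
  rw [← pow_add, show a + k + b + (k + m) = a + m + b + 2 * k by ring, pow_add _ (a + m + b),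
    pow_mul, neg_one_sq, one_pow, mul_one]

theorem stmt5_general (n i : ℕ) :
    gammaPlus n i * gammaMinus n i = 0 := by
  by_contra h
  obtain ⟨k, hk⟩ := Finset.card_pos.mp (Nat.pos_of_ne_zero (left_ne_zero_of_mul h))
  obtain ⟨m, hm⟩ := Finset.card_pos.mp (Nat.pos_of_ne_zero (right_ne_zero_of_mul h))
  obtain ⟨hk_dvd, hk_eq⟩ := Finset.mem_filter.mp hk
  obtain ⟨hm_dvd, hm_eq⟩ := Finset.mem_filter.mp hm
  have hk_pos : (0 : ℤ) < k := by exact_mod_cast Nat.pos_of_mem_divisors hk_dvd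
  have hm_pos : (0 : ℤ) < m := by exact_mod_cast Nat.pos_of_mem_divisors hm_dvd
  rw [neg_one_pow_add_add_eq_mul n k m i] at hm_eq
  rcases Nat.even_or_odd (k + m) with hkm | hkm
  · rw [hkm.neg_one_pow, mul_one] at hm_eq
    have hmk := Int.eq_add_of_mul_add_add_eq_mul_add_sub hk_pos hm_pos (by positivity)
      (abs_neg_one_pow (n + k + i)).le (hk_eq.trans hm_eq.symm)
    have hodd : Odd ((k + m : ℕ) : ℤ) := by
      rw [Nat.cast_add, hmk, show (k : ℤ) + (k + (-1) ^ (n + k + i)) =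
        2 * k + (-1) ^ (n + k + i) by ring]
      exact Even.add_odd (even_two_mul _) (odd_neg_one.pow)
    exact Nat.not_odd_iff_even.mpr hkm ((Int.odd_coe_nat _).mp hodd)
  · rw [hkm.neg_one_pow, mul_neg_one, sub_neg_eq_add] at hm_eq
    have hroot : (k : ℤ) = m := eq_of_mul_add_eq_mul_add (c := 2 * i + (-1) ^ (n + k + i))
      (by rcases neg_one_pow_eq_or ℤ (n + k + i) with hs | hs <;> rw [hs] <;> omega)
      (by linear_combination hk_eq - hm_eq)
    have hkm_eq : k = m := by exact_mod_cast hroot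
    subst hkm_eq
    exact Nat.not_even_iff_odd.mpr hkm ⟨k, rfl⟩

theorem stmt5 (n i : ℕ) (hn : 0 < n) (hi : i ≤ n) :
    gammaPlus n i * gammaMinus n i = 0 :=
  stmt5_general n i
end

section
/- Define γ⁺(n,i) as the number of divisors k of 2n with k(k + 2i + (-1)^(n+k+i))/2 = n, and γ⁻(n,i) similarly with -(-1)^(n+k+i). Then γ⁺(n,0) + 2·Σ_{i=1}^{n} γ⁺(n,i) = 4·d_{1,4}(n), where d_{1,4}(n) is the number of divisors of n congruent to 1 mod 4. -/
/-!
Write `2n = k m` with `m = k + 2i + 1`. The divisors counted by `γ⁺(n, i)` with sign `+1` are the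
`k` with `k(k + 2i + 1) = 2n` and `n + k + i` even; those with sign `-1` are the same solutions
for `i - 1`, and for `i = 0` the solutions for `0` shifted by one. So the left side telescopes to
`4 ∑_{i<n} #{such k}`.

Since `(k + 1)(m + 1) = 2(n + k + i + 1)`, the parity condition says `(k + 1)(m + 1) ≡ 2 (mod 4)`:
exactly one of `k, m` is odd, and it is `≡ 1 (mod 4)`. On the divisors `k` of `2n` with this
property `k ↦ 2n/k` is a fixed-point-free involution, so those with `k < 2n/k` (the solutions,
with `i = (m - k - 1)/2`) are as many as the odd ones, which are the divisors of `n` that are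
`≡ 1 (mod 4)`.
-/

open Finset

section Involution

variable {α : Type*} (s : Finset α) (σ : α → α)

theorem two_mul_card_filter_of_involution (hσ : ∀ x ∈ s, σ x ∈ s)
    (hσσ : ∀ x ∈ s, σ (σ x) = x) (p : α → Prop) [DecidablePred p]
    (hp : ∀ x ∈ s, (p (σ x) ↔ ¬ p x)) :
    2 * #(s.filter p) = #s := by
  have hswap : #(s.filter fun x => ¬ p x) = #(s.filter p) := by
    refine card_nbij' σ σ ?_ ?_ ?_ ?_ <;> intro x hx <;>
      simp only [coe_filter, Set.mem_ofPred_eq] at hx ⊢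
    · exact ⟨hσ x hx.1, (hp x hx.1).2 hx.2⟩
    · exact ⟨hσ x hx.1, fun h => (hp x hx.1).1 h hx.2⟩
    · exact hσσ x hx.1
    · exact hσσ x hx.1
  rw [← card_filter_add_card_filter_not (s := s) p, hswap, two_mul]

theorem card_filter_lt_eq_card_filter_of_involution [LinearOrder α] (hσ : ∀ x ∈ s, σ x ∈ s)
    (hσσ : ∀ x ∈ s, σ (σ x) = x) (p : α → Prop) [DecidablePred p]
    (hp : ∀ x ∈ s, (p (σ x) ↔ ¬ p x)) :
    #(s.filter fun x => x < σ x) = #(s.filter p) := by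
  have hlt : ∀ x ∈ s, (σ x < σ (σ x) ↔ ¬ x < σ x) := by
    intro x hx
    have hne : σ x ≠ x := fun h => iff_not_self (h ▸ hp x hx)
    rw [hσσ x hx, not_lt]
    exact ⟨le_of_lt, fun h => lt_of_le_of_ne h hne⟩
  have h₁ := two_mul_card_filter_of_involution s σ hσ hσσ (fun x => x < σ x) hlt
  have h₂ := two_mul_card_filter_of_involution s σ hσ hσσ p hp
  omega

end Involution

theorem odd_iff_not_odd_of_succ_mul_succ_mod_four {a b : ℕ} (h : (a + 1) * (b + 1) % 4 = 2) :
    Odd b ↔ ¬ Odd a := by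
  rw [Nat.not_odd_iff_even, Nat.odd_iff, Nat.even_iff]
  rcases Nat.even_or_odd' a with ⟨s, rfl | rfl⟩ <;>
    rcases Nat.even_or_odd' b with ⟨t, rfl | rfl⟩ <;> ring_nf at h <;> omega

theorem succ_mul_succ_mod_four_eq_two_iff {a b : ℕ} (ha : Odd a) (hb : Even b) :
    (a + 1) * (b + 1) % 4 = 2 ↔ a % 4 = 1 := by
  obtain ⟨s, rfl⟩ := ha
  obtain ⟨t, rfl⟩ := hb
  ring_nf
  omega

theorem even_add_add_iff_of_mul_eq {n k i : ℕ} (h : k * (k + 2 * i + 1) = 2 * n) :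
    Even (n + k + i) ↔ (k + 1) * (k + 2 * i + 1 + 1) % 4 = 2 := by
  have : (k + 1) * (k + 2 * i + 1 + 1) = 2 * (n + k + i + 1) := by nlinarith
  rw [this, Nat.even_iff]
  omega

/-- `k(k + 2i + 1)/2 = (i + 1) + ⋯ + (i + k)`: the lengths of runs of consecutive integers from
`i + 1` summing to `n`, with `n + k + i` even. -/
def evenRuns (n i : ℕ) : Finset ℕ :=
  (2 * n).divisors.filter fun k => k * (k + 2 * i + 1) = 2 * n ∧ Even (n + k + i)

theorem evenRuns_self (n : ℕ) : evenRuns n n = ∅ := by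
  refine filter_false_of_mem fun k hk ⟨h, _⟩ => ?_
  have := Nat.pos_of_mem_divisors hk
  nlinarith

theorem gammaPlus_eq_card_evenRuns_add (n i : ℕ) :
    gammaPlus n i = #(evenRuns n i) + #((2 * n).divisors.filter
      fun k : ℕ => (k : ℤ) * (k + 2 * i - 1) = 2 * n ∧ ¬ Even (n + k + i)) := by
  rw [gammaPlus, ← card_filter_add_card_filter_not (fun k => Even (n + k + i)), filter_filter,
    filter_filter]
  congr 2 <;> refine filter_congr fun k _ => ?_
  · refine and_congr_left fun he => ?_
    rw [he.neg_one_pow]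
    norm_cast
  · refine and_congr_left fun he => ?_
    rw [(Nat.not_even_iff_odd.mp he).neg_one_pow, ← sub_eq_add_neg]

theorem gammaPlus_succ (n i : ℕ) :
    gammaPlus n (i + 1) = #(evenRuns n (i + 1)) + #(evenRuns n i) := by
  rw [gammaPlus_eq_card_evenRuns_add]
  congr 2
  refine filter_congr fun k _ => ?_
  rw [← add_assoc, Nat.even_add_one, not_not]
  push_cast
  rw [show (k : ℤ) + 2 * (i + 1) - 1 = k + 2 * i + 1 by ring]
  norm_cast

theorem gammaPlus_zero (n : ℕ) : gammaPlus n 0 = 2 * #(evenRuns n 0) := by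
  rw [gammaPlus_eq_card_evenRuns_add, two_mul (#(evenRuns n 0))]
  congr 1
  refine card_nbij' (· - 1) (· + 1) ?_ ?_ ?_ ?_ <;> intro k hk <;>
    simp only [coe_filter, evenRuns, Set.mem_ofPred_eq, Nat.mem_divisors, Nat.cast_zero, mul_zero,
      add_zero] at hk ⊢
  · obtain ⟨⟨hk, hn⟩, h, he⟩ := hk
    have := Nat.pos_of_dvd_of_pos hk (by omega)
    obtain ⟨j, rfl⟩ : ∃ j, k = j + 1 := ⟨k - 1, by omega⟩
    have h' : j * (j + 1) = 2 * n := by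
      push_cast at h
      exact_mod_cast (by linear_combination h : (j : ℤ) * (j + 1) = 2 * n)
    rw [Nat.add_sub_cancel]
    rw [← add_assoc, Nat.even_add_one, not_not] at he
    exact ⟨⟨Dvd.intro _ h', hn⟩, h', he⟩
  · obtain ⟨⟨-, hn⟩, h, he⟩ := hk
    refine ⟨⟨Dvd.intro_left k h, hn⟩, ?_, by rwa [← add_assoc, Nat.even_add_one, not_not]⟩
    push_cast
    linear_combination (by exact_mod_cast h : (k : ℤ) * (k + 1) = 2 * n)
  · have := Nat.pos_of_dvd_of_pos hk.1.1 (by omega)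
    omega
  · rfl

theorem pairwiseDisjoint_evenRuns (n : ℕ) (s : Set ℕ) : s.PairwiseDisjoint (evenRuns n) := by
  intro i _ j _ hij
  refine disjoint_left.mpr fun k hi hj => hij ?_
  simp only [evenRuns, mem_filter] at hi hj
  have := Nat.eq_of_mul_eq_mul_left (Nat.pos_of_mem_divisors hi.1) (hi.2.1.trans hj.2.1.symm)
  omega

/-- Exactly one of `k` and `2n/k` is odd, and that one is `≡ 1 (mod 4)`. -/
def admissibleDivisors (n : ℕ) : Finset ℕ :=
  (2 * n).divisors.filter fun k => (k + 1) * (2 * n / k + 1) % 4 = 2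

theorem biUnion_evenRuns (n : ℕ) :
    (range n).biUnion (evenRuns n) = (admissibleDivisors n).filter fun k => k < 2 * n / k := by
  ext k
  simp only [mem_biUnion, mem_range, evenRuns, admissibleDivisors, mem_filter]
  constructor
  · rintro ⟨i, -, hk, h, he⟩
    rw [Nat.div_eq_of_eq_mul_right (Nat.pos_of_mem_divisors hk) h.symm]
    exact ⟨⟨hk, (even_add_add_iff_of_mul_eq h).mp he⟩, by omega⟩
  · rintro ⟨⟨hk, hmod⟩, hlt⟩
    have hkm : k * (2 * n / k) = 2 * n := Nat.mul_div_cancel' (Nat.dvd_of_mem_divisors hk)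
    have hpar := odd_iff_not_odd_of_succ_mul_succ_mod_four hmod
    simp only [Nat.odd_iff] at hpar
    obtain ⟨i, hi⟩ : ∃ i, 2 * n / k = k + 2 * i + 1 := ⟨(2 * n / k - k - 1) / 2, by omega⟩
    have hle := Nat.div_le_self (2 * n) k
    rw [hi] at hkm hmod
    exact ⟨i, by omega, hk, hkm, (even_add_add_iff_of_mul_eq hkm).mpr hmod⟩

theorem filter_odd_admissibleDivisors (n : ℕ) :
    (admissibleDivisors n).filter Odd = n.divisors.filter (· % 4 = 1) := by
  ext k
  simp only [admissibleDivisors, mem_filter, Nat.mem_divisors]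
  constructor
  · rintro ⟨⟨⟨hk, hn⟩, hmod⟩, hodd⟩
    have hkn : k ∣ n := hodd.coprime_two_right.dvd_of_dvd_mul_left hk
    rw [Nat.mul_div_assoc 2 hkn, succ_mul_succ_mod_four_eq_two_iff hodd (even_two_mul _)] at hmod
    exact ⟨⟨hkn, by omega⟩, hmod⟩
  · rintro ⟨⟨hkn, hn⟩, hmod⟩
    have hodd : Odd k := Nat.odd_iff.mpr (by omega)
    rw [Nat.mul_div_assoc 2 hkn, succ_mul_succ_mod_four_eq_two_iff hodd (even_two_mul _)]
    exact ⟨⟨⟨hkn.mul_left 2, by omega⟩, hmod⟩, hodd⟩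

theorem sum_card_evenRuns (n : ℕ) : ∑ i ∈ range n, #(evenRuns n i) = d4 1 n := by
  rw [← card_biUnion (pairwiseDisjoint_evenRuns n _), biUnion_evenRuns, d4,
    ← filter_odd_admissibleDivisors]
  refine card_filter_lt_eq_card_filter_of_involution _ (2 * n / ·) ?_ ?_ Odd ?_
  · intro k hk
    simp only [admissibleDivisors, mem_filter, Nat.mem_divisors] at hk ⊢
    obtain ⟨⟨hk, hn⟩, hmod⟩ := hk
    rw [Nat.div_div_self hk hn, mul_comm (2 * n / k + 1)]
    exact ⟨⟨Nat.div_dvd_of_dvd hk, hn⟩, hmod⟩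
  · intro k hk
    simp only [admissibleDivisors, mem_filter, Nat.mem_divisors] at hk
    exact Nat.div_div_self hk.1.1 hk.1.2
  · intro k hk
    exact odd_iff_not_odd_of_succ_mul_succ_mod_four (mem_filter.mp hk).2

theorem stmt6_general (n : ℕ) :
    gammaPlus n 0 + 2 * ∑ i ∈ Finset.Icc 1 n, gammaPlus n i = 4 * d4 1 n := by
  have hIcc : ∑ i ∈ Icc 1 n, gammaPlus n i = ∑ i ∈ range n, gammaPlus n (i + 1) := by
    rw [← Ico_add_one_right_eq_Icc, sum_Ico_eq_sum_range, add_tsub_cancel_right]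
    simp only [add_comm]
  have hshift := sum_range_succ' (fun i => #(evenRuns n i)) n
  have htop := sum_range_succ (fun i => #(evenRuns n i)) n
  simp only [evenRuns_self, card_empty, add_zero] at htop
  rw [hIcc, gammaPlus_zero]
  simp only [gammaPlus_succ, sum_add_distrib]
  have := sum_card_evenRuns n
  omega

theorem stmt6 (n : ℕ) (hn : 0 < n) :
    gammaPlus n 0 + 2 * ∑ i ∈ Finset.Icc 1 n, gammaPlus n i = 4 * d4 1 n :=
  stmt6_general n
end

section
/- Define γ⁻(n,i) as the number of divisors k of 2n with k(k + 2i - (-1)^(n+k+i))/2 = n. Then γ⁻(n,0) + 2·Σ_{i=1}^{n} γ⁻(n,i) = 4·d_{3,4}(n), where d_{3,4}(n) is the number of divisors of n congruent to 3 mod 4. -/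
/-!
Write `2n = k * m`. After cancelling `k`, the condition on the divisor `k` reads
`m - k = 2i - (-1)^(n+k+i)`, so `m - k` is odd and exactly one of `k, m` is odd. Working mod 4,
the sign condition can be met iff the odd one is `≡ 3 (mod 4)`, and then the admissible `i` are the
natural numbers among the two integers nearest to `(m - k)/2`. For the divisor `m` these are the
negatives of the integers nearest to `(m - k)/2`. The left side weights `i = 0` by `1` and `i > 0`
by `2`; extending the weight by `0` to negative `i`, it satisfies `w i + w (-i) = 2`, so every pair
`{k, m}` with odd member `≡ 3 (mod 4)` contributes `4` and every other pair nothing.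
-/

open Finset

def weightedCount (P : ℕ → Prop) [DecidablePred P] (n : ℕ) : ℕ :=
  (if P 0 then 1 else 0) + 2 * #{i ∈ Icc 1 n | P i}

def IsGammaMinusDivisor (n i k : ℕ) : Prop :=
  (k : ℤ) * ((k : ℤ) + 2 * i - (-1 : ℤ) ^ ((n + k + i : ℕ))) = 2 * n

instance (n i k : ℕ) : Decidable (IsGammaMinusDivisor n i k) :=
  inferInstanceAs (Decidable (_ = _))

lemma gammaMinus_add_two_mul_sum (n : ℕ) :
    gammaMinus n 0 + 2 * ∑ i ∈ Icc 1 n, gammaMinus n i =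
      ∑ k ∈ (2 * n).divisors, weightedCount (IsGammaMinusDivisor n · k) n := by
  have hcard (i : ℕ) : gammaMinus n i =
      ∑ k ∈ (2 * n).divisors, if IsGammaMinusDivisor n i k then 1 else 0 :=
    card_filter _ _
  simp_rw [hcard]
  simp only [weightedCount, card_filter, mul_sum]
  rw [sum_comm, sum_add_distrib]

lemma weightedCount_abs_sub_add_weightedCount_abs_add {n : ℕ} {s : ℤ} (hs : Odd s) (hsn : |s| < 2 * n) :
    weightedCount (fun i => |2 * (i : ℤ) - s| = 1) n +
      weightedCount (fun i => |2 * (i : ℤ) + s| = 1) n = 4 := by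
  wlog hpos : 0 < s generalizing s
  · have := this (s := -s) hs.neg (by rwa [abs_neg])
      (by rcases hs with ⟨r, rfl⟩; omega)
    rw [add_comm]
    simpa only [sub_neg_eq_add, ← sub_eq_add_neg] using this
  obtain ⟨t, rfl⟩ : ∃ t : ℕ, s = 2 * t + 1 := by
    rcases hs with ⟨r, rfl⟩
    lift r to ℕ using (by omega)
    exact ⟨r, rfl⟩
  rw [abs_of_pos hpos] at hsn
  simp only [weightedCount, abs_eq zero_le_one]
  have hneg : #{i ∈ Icc 1 n | 2 * ((i : ℕ) : ℤ) + (2 * t + 1) = 1 ∨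
      2 * (i : ℤ) + (2 * t + 1) = -1} = 0 := by
    rw [card_eq_zero, filter_eq_empty_iff]
    intro i hi
    simp only [mem_Icc] at hi
    omega
  rcases Nat.eq_zero_or_pos t with rfl | htpos
  · simp only [Nat.cast_zero, mul_zero, zero_add] at hneg ⊢
    have hnear : {i ∈ Icc 1 n | 2 * ((i : ℕ) : ℤ) - 1 = 1 ∨ 2 * (i : ℤ) - 1 = -1} = {1} := by
      ext i
      simp only [mem_filter, mem_Icc, mem_singleton]
      omega
    rw [hnear, hneg, card_singleton]
    norm_num
  · have hnear : {i ∈ Icc 1 n | 2 * ((i : ℕ) : ℤ) - (2 * (t : ℤ) + 1) = 1 ∨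
        2 * (i : ℤ) - (2 * (t : ℤ) + 1) = -1} = {t, t + 1} := by
      ext i
      simp only [mem_filter, mem_Icc, mem_insert, mem_singleton]
      omega
    rw [hnear, hneg, card_pair (by omega), if_neg (by omega), if_neg (by omega)]

lemma isGammaMinusDivisor_iff {n i k m : ℕ} (hk : k ≠ 0) (hkm : k * m = 2 * n) :
    IsGammaMinusDivisor n i k ↔ (k % 4 = 3 ∨ m % 4 = 3) ∧ |2 * (i : ℤ) - (m - k)| = 1 := by
  have hkm' : (2 : ℤ) * n = k * m := by exact_mod_cast hkm.symm
  have hmod : 2 * n % 4 = k % 4 * (m % 4) % 4 := by rw [← hkm, Nat.mul_mod]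
  have hk4 : k % 4 < 4 := Nat.mod_lt _ (by norm_num)
  have hm4 : m % 4 < 4 := Nat.mod_lt _ (by norm_num)
  unfold IsGammaMinusDivisor
  rw [hkm', mul_right_inj' (by exact_mod_cast hk), abs_eq zero_le_one]
  rcases Nat.even_or_odd (n + k + i) with h | h
  · rw [h.neg_one_pow]
    have := Nat.even_iff.mp h
    interval_cases hk4 : k % 4 <;> interval_cases hm4 : m % 4 <;> omega
  · rw [h.neg_one_pow]
    have := Nat.odd_iff.mp h
    interval_cases hk4 : k % 4 <;> interval_cases hm4 : m % 4 <;> omega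

lemma sum_divisors_eq_sum_odd_divisors {M : Type*} [AddCommMonoid M] {N : ℕ} (hN : Even N)
    (f : ℕ → M) (hf : ∀ k ∈ N.divisors, Even k → Even (N / k) → f k = 0) :
    ∑ k ∈ N.divisors, f k = ∑ k ∈ N.divisors with Odd k, (f k + f (N / k)) := by
  have hsplit : ∀ k ∈ N.divisors,
      f k = (if Odd k then f k else 0) + (if Odd (N / k) then f k else 0) := by
    intro k hk
    have hprod : k * (N / k) = N := Nat.mul_div_cancel' (Nat.dvd_of_mem_divisors hk)
    by_cases hko : Odd k <;> by_cases hmo : Odd (N / k)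
    · exact absurd (hprod ▸ hko.mul hmo) (Nat.not_odd_iff_even.mpr hN)
    all_goals simp only [hko, hmo, if_true, if_false, add_zero, zero_add]
    rw [Nat.not_odd_iff_even] at hko hmo
    exact hf k hk hko hmo
  calc ∑ k ∈ N.divisors, f k
      = ∑ k ∈ N.divisors, ((if Odd k then f k else 0) + (if Odd (N / k) then f k else 0)) :=
        sum_congr rfl hsplit
    _ = ∑ k ∈ N.divisors, ((if Odd k then f k else 0) + (if Odd k then f (N / k) else 0)) := by
        rw [sum_add_distrib, sum_add_distrib,
          ← Nat.sum_div_divisors N (fun k => if Odd k then f (N / k) else 0)]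
        congr 1
        refine sum_congr rfl fun k hk => ?_
        rw [Nat.div_div_self (Nat.dvd_of_mem_divisors hk) (Nat.mem_divisors.mp hk).2]
    _ = ∑ k ∈ N.divisors with Odd k, (f k + f (N / k)) := by
        simp only [sum_filter, ite_add_ite, add_zero]

lemma weightedCount_add_weightedCount_cofactor {n k m : ℕ} (hn : 0 < n) (hkm : k * m = 2 * n)
    (hk : Odd k) :
    weightedCount (IsGammaMinusDivisor n · k) n + weightedCount (IsGammaMinusDivisor n · m) n =
      if k % 4 = 3 then 4 else 0 := by
  have hmk : m * k = 2 * n := by rw [mul_comm, hkm]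
  have hk0 : k ≠ 0 := by rintro rfl; omega
  have hm0 : m ≠ 0 := by rintro rfl; omega
  have hm : Even m :=
    ((Nat.even_mul.mp (hkm ▸ even_two_mul n)).resolve_left (Nat.not_even_iff_odd.mpr hk))
  have hm3 : m % 4 ≠ 3 := by rw [Nat.even_iff] at hm; omega
  simp only [isGammaMinusDivisor_iff hk0 hkm, isGammaMinusDivisor_iff hm0 hmk, hm3, or_false]
  split_ifs with hk3
  · have hkle : k ≤ 2 * n := Nat.le_of_dvd (by omega) (Dvd.intro _ hkm)
    have hmle : m ≤ 2 * n := Nat.le_of_dvd (by omega) (Dvd.intro _ hmk)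
    have hodd : Odd ((m : ℤ) - k) := by
      rw [Int.odd_sub']
      exact iff_of_true hk.natCast hm.natCast
    have hlt : |(m : ℤ) - k| < 2 * n := by rw [abs_sub_lt_iff]; omega
    have hcount := weightedCount_abs_sub_add_weightedCount_abs_add hodd hlt
    simp only [← sub_neg_eq_add, neg_sub] at hcount
    simpa only [hk3, true_and, or_true] using hcount
  · simp [weightedCount, hk3]

lemma weightedCount_eq_zero_of_even {n k m : ℕ} (hk0 : k ≠ 0) (hkm : k * m = 2 * n)
    (hk : Even k) (hm : Even m) : weightedCount (IsGammaMinusDivisor n · k) n = 0 := by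
  rw [Nat.even_iff] at hk hm
  have hk3 : k % 4 ≠ 3 := by omega
  have hm3 : m % 4 ≠ 3 := by omega
  simp [weightedCount, isGammaMinusDivisor_iff hk0 hkm, hk3, hm3]

lemma filter_divisors_two_mul_mod_four_eq_three (n : ℕ) :
    {d ∈ (2 * n).divisors | d % 4 = 3} = {d ∈ n.divisors | d % 4 = 3} := by
  ext d
  simp only [mem_filter, Nat.mem_divisors, mul_ne_zero_iff, ne_eq, OfNat.ofNat_ne_zero,
    not_false_eq_true, true_and, and_congr_left_iff, and_congr_left_iff]
  intro hd3 _
  refine Nat.Coprime.dvd_mul_left (Nat.coprime_two_right.mpr ?_)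
  rw [Nat.odd_iff]
  omega

theorem stmt7 (n : ℕ) (hn : 0 < n) :
    gammaMinus n 0 + 2 * ∑ i ∈ Finset.Icc 1 n, gammaMinus n i = 4 * d4 3 n := by
  have hcofactor {k : ℕ} (hk : k ∈ (2 * n).divisors) : k * (2 * n / k) = 2 * n :=
    Nat.mul_div_cancel' (Nat.dvd_of_mem_divisors hk)
  rw [gammaMinus_add_two_mul_sum, sum_divisors_eq_sum_odd_divisors (even_two_mul n) _
    fun k hk hke hme => weightedCount_eq_zero_of_even (Nat.pos_of_mem_divisors hk).ne'
      (hcofactor hk) hke hme]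
  calc ∑ k ∈ (2 * n).divisors with Odd k, (weightedCount (IsGammaMinusDivisor n · k) n +
        weightedCount (IsGammaMinusDivisor n · (2 * n / k)) n)
      = ∑ k ∈ (2 * n).divisors with Odd k, if k % 4 = 3 then 4 else 0 :=
        sum_congr rfl fun k hk => weightedCount_add_weightedCount_cofactor hn
          (hcofactor (mem_filter.mp hk).1) (mem_filter.mp hk).2
    _ = ∑ k ∈ (2 * n).divisors with k % 4 = 3, 4 := by
        rw [sum_filter, sum_filter]
        refine sum_congr rfl fun k _ => ?_
        by_cases hk3 : k % 4 = 3
        · rw [if_pos (Nat.odd_iff.mpr (by omega))]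
        · simp [hk3]
    _ = 4 * d4 3 n := by
        rw [sum_const, smul_eq_mul, filter_divisors_two_mul_mod_four_eq_three, mul_comm, d4]
end

section
/- For a positive integer n, the following are equivalent: (a) n has no divisor congruent to 3 mod 4; (b) n = 2^k · z for some integer k ≥ 0 and some primitive Pythagorean triple (x, y, z). -/
/-!
If `x² + y² = z²` with `x, y` coprime, then `-1` is a square modulo `z²`, hence modulo every
divisor `d` of the odd part `z` of `2ᵏ z`; but for `d ≡ 3 (mod 4)` the Jacobi symbol
`(-1 | d) = χ₄ d = -1` forbids this.

Conversely, if every prime factor `p` of the odd part `m` of `n` is `≡ 1 (mod 4)`, write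
`p = π π̄` in `ℤ[i]` and multiply these Gaussian primes together, choosing `π` or `π̄` at each
step so that the product `α` stays coprime to its conjugate. Then so is `α²`, whose real and
imaginary parts are therefore coprime legs of a Pythagorean triple with hypotenuse `N α = m`.
-/

section StarCoprime

variable {R : Type*} [CommRing R] [StarRing R]

theorem IsCoprime.star {a b : R} (h : IsCoprime a b) : IsCoprime (star a) (star b) := by
  simpa only [starRingEnd_apply] using h.map (starRingEnd R)

theorem isCoprime_mul_star_self {p a : R} (hp : IsCoprime p (star p))
    (hpa : IsCoprime p (star a)) (ha : IsCoprime a (star a)) :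
    IsCoprime (p * a) (star (p * a)) := by
  have hap : IsCoprime a (star p) := by simpa only [star_star] using hpa.star.symm
  rw [star_mul']
  exact (hp.mul_right hpa).mul_left (hap.mul_right ha)

theorem Irreducible.exists_isCoprime_mul_star_self [IsBezout R] {p a : R} (hp : Irreducible p)
    (hpp : IsCoprime p (star p)) (ha : IsCoprime a (star a)) :
    ∃ q, (q = p ∨ q = star p) ∧ IsCoprime (q * a) (star (q * a)) := by
  by_cases hpa : p ∣ star a
  · have hpa' : IsCoprime p a :=
      hp.coprime_iff_not_dvd.2 fun h ↦ hp.not_isUnit (ha.isUnit_of_dvd' h hpa)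
    refine ⟨star p, Or.inr rfl, isCoprime_mul_star_self ?_ ?_ ha⟩
    · simpa only [star_star] using hpp.symm
    · simpa only [star_star] using hpa'.star
  · exact ⟨p, Or.inl rfl, isCoprime_mul_star_self hpp (hp.coprime_iff_not_dvd.2 hpa) ha⟩

end StarCoprime

theorem IsCoprime.of_add_mul {R : Type*} [CommRing R] {x y : R} (h : IsCoprime (x + y) (x * y)) :
    IsCoprime x y := by
  have hyx : IsCoprime (y + 1 * x) x := by rw [one_mul, add_comm]; exact h.of_mul_right_left
  exact (IsCoprime.add_mul_right_left_iff.1 hyx).symm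

theorem Zsqrtd.irreducible_of_natAbs_norm_prime {d : ℤ} {x : ℤ√d} (h : x.norm.natAbs.Prime) :
    Irreducible x := by
  refine ⟨fun hx ↦ h.ne_one (norm_eq_one_iff.2 hx), fun a b hab ↦ ?_⟩
  rw [hab, norm_mul, Int.natAbs_mul, Nat.prime_mul_iff] at h
  rcases h with ⟨-, hb⟩ | ⟨-, ha⟩
  · exact Or.inr (norm_eq_one_iff.1 hb)
  · exact Or.inl (norm_eq_one_iff.1 ha)

theorem Zsqrtd.isCoprime_re_im_of_isCoprime_star {d : ℤ} {α : ℤ√d} (h : IsCoprime α (star α)) :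
    IsCoprime α.re α.im := by
  rw [Int.isCoprime_iff_gcd_eq_one]
  set g := Int.gcd α.re α.im
  have hdvd : ((g : ℤ) : ℤ√d) ∣ α :=
    (intCast_dvd _ _).2 ⟨Int.gcd_dvd_left _ _, Int.gcd_dvd_right _ _⟩
  have hdvd' : ((g : ℤ) : ℤ√d) ∣ star α := by
    simpa [starRingEnd_apply] using map_dvd (starRingEnd (ℤ√d)) hdvd
  simpa [Int.natAbs_mul] using norm_eq_one_iff.2 (h.isUnit_of_dvd' hdvd hdvd')

namespace GaussianInt

local notation "ℤ[i]" => GaussianInt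

theorem exists_irreducible_isCoprime_star_norm_eq_prime {p : ℕ} (hp : p.Prime)
    (hp4 : p % 4 = 1) :
    ∃ π : ℤ[i], π.norm = p ∧ Irreducible π ∧ IsCoprime π (star π) := by
  have := Fact.mk hp
  obtain ⟨a, b, hab⟩ := Nat.Prime.sq_add_sq (p := p) (by omega)
  set π : ℤ[i] := ⟨a, b⟩
  have hnorm : π.norm = p := by
    rw [← hab, Zsqrtd.norm_def]; push_cast; ring
  have ha : 0 < a := by
    by_contra! h
    obtain rfl : a = 0 := by omega
    exact Nat.Prime.not_prime_pow (x := b) le_rfl (by simpa [← hab] using hp)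
  have hpa : ¬ p ∣ a := fun h ↦ by nlinarith [Nat.le_of_dvd ha h, hp.two_le]
  have hcop : IsCoprime (2 * a : ℤ) p := by
    rw [Int.isCoprime_iff_gcd_eq_one]
    exact_mod_cast Nat.Coprime.mul_left (Nat.coprime_two_left.2 (hp.odd_of_ne_two (by omega)))
      ((hp.coprime_iff_not_dvd.2 hpa).symm)
  refine ⟨π, hnorm, Zsqrtd.irreducible_of_natAbs_norm_prime (by simpa [hnorm] using hp), ?_⟩
  -- `π + star π = 2 * a` and `π * star π = p`
  refine IsCoprime.of_add_mul ?_
  rw [← Zsqrtd.norm_eq_mul_conj, hnorm]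
  convert hcop.map (Int.castRingHom ℤ[i]) using 1 <;> ext <;> simp [π, two_mul]

theorem exists_norm_eq_isCoprime_star {m : ℕ} (hm : ∀ p, p.Prime → p ∣ m → p % 4 = 1) :
    ∃ α : ℤ[i], α.norm = m ∧ IsCoprime α (star α) := by
  induction m using induction_on_primes with
  | zero => exact absurd (hm 3 Nat.prime_three (dvd_zero 3)) (by decide)
  | one => exact ⟨1, by simp, by simp [isCoprime_one_left]⟩
  | prime_mul p m hp ih =>
    obtain ⟨α, hαn, hα⟩ := ih fun q hq hqm ↦ hm q hq (dvd_mul_of_dvd_right hqm p)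
    obtain ⟨π, hπn, hπ, hππ⟩ :=
      exists_irreducible_isCoprime_star_norm_eq_prime hp (hm p hp (dvd_mul_right p m))
    obtain ⟨ρ, hρ, hρα⟩ := hπ.exists_isCoprime_mul_star_self hππ hα
    refine ⟨ρ * α, ?_, hρα⟩
    have hρn : ρ.norm = p := by rcases hρ with rfl | rfl <;> simp [Zsqrtd.norm_conj, hπn]
    rw [Zsqrtd.norm_mul, hρn, hαn, Nat.cast_mul]

theorem exists_coprime_sq_add_sq_eq_sq {z : ℕ} (hz : ∀ p, p.Prime → p ∣ z → p % 4 = 1) :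
    ∃ x y : ℕ, x ^ 2 + y ^ 2 = z ^ 2 ∧ Nat.Coprime x y := by
  obtain ⟨α, hαn, hα⟩ := exists_norm_eq_isCoprime_star hz
  have hβ : IsCoprime (α ^ 2) (star (α ^ 2)) := by rw [star_pow]; exact hα.pow
  refine ⟨(α ^ 2).re.natAbs, (α ^ 2).im.natAbs, ?_,
    Int.isCoprime_iff_gcd_eq_one.1 (Zsqrtd.isCoprime_re_im_of_isCoprime_star hβ)⟩
  have hβn : (α ^ 2).norm = (z : ℤ) ^ 2 := by rw [sq, Zsqrtd.norm_mul, hαn, sq]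
  rw [sq (Int.natAbs _), sq (Int.natAbs _), ← natAbs_norm_eq, hβn, Int.natAbs_pow,
    Int.natAbs_natCast]

end GaussianInt

theorem ZMod.not_isSquare_neg_one_of_mod_four_eq_three {d : ℕ} (hd : d % 4 = 3) :
    ¬ IsSquare (-1 : ZMod d) := by
  have hJ : jacobiSym (-1) d = -1 := by
    rw [jacobiSym.at_neg_one (Nat.odd_iff.2 (Nat.odd_of_mod_four_eq_three hd)),
      ZMod.χ₄_nat_three_mod_four hd]
  simpa using ZMod.nonsquare_of_jacobiSym_eq_neg_one hJ

theorem Nat.coprime_of_sq_add_sq_eq_sq {x y z : ℕ} (h : x ^ 2 + y ^ 2 = z ^ 2)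
    (hg : Nat.gcd (Nat.gcd x y) z = 1) : Nat.Coprime x y := by
  have hgz : Nat.gcd x y ∣ z := by
    rw [← Nat.pow_dvd_pow_iff two_ne_zero, ← h]
    exact dvd_add (pow_dvd_pow_of_dvd (Nat.gcd_dvd_left x y) 2)
      (pow_dvd_pow_of_dvd (Nat.gcd_dvd_right x y) 2)
  rwa [Nat.gcd_eq_left hgz] at hg

theorem mod_four_ne_three_of_dvd_of_sq_add_sq_eq_sq {x y z d : ℕ} (h : x ^ 2 + y ^ 2 = z ^ 2)
    (hxy : Nat.Coprime x y) (hd : d ∣ z) : d % 4 ≠ 3 := fun hd4 ↦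
  ZMod.not_isSquare_neg_one_of_mod_four_eq_three hd4 <| ZMod.isSquare_neg_one_of_dvd
    (hd.trans (dvd_pow_self z two_ne_zero))
    (ZMod.isSquare_neg_one_of_eq_sq_add_sq_of_coprime h.symm hxy)

theorem stmt11 (n : ℕ) (hn : 0 < n) :
    (∀ d : ℕ, d ∣ n → d % 4 ≠ 3) ↔
      (∃ (k x y z : ℕ), x ^ 2 + y ^ 2 = z ^ 2 ∧ Nat.gcd (Nat.gcd x y) z = 1 ∧
        n = 2 ^ k * z) := by
  constructor
  · intro h
    obtain ⟨k, m, hm, rfl⟩ := Nat.exists_eq_two_pow_mul_odd hn.ne'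
    have hm4 : ∀ p, p.Prime → p ∣ m → p % 4 = 1 := fun p _ hpm ↦ by
      have h3 := h p (dvd_mul_of_dvd_right hpm _)
      have h2 := Nat.odd_iff.1 (hm.of_dvd_nat hpm)
      omega
    obtain ⟨x, y, hxy, hcop⟩ := GaussianInt.exists_coprime_sq_add_sq_eq_sq hm4
    exact ⟨k, x, y, m, hxy, by rw [hcop, Nat.gcd_one_left], rfl⟩
  · rintro ⟨k, x, y, z, hxyz, hg, rfl⟩ d hd hd4
    have hd_odd : Odd d := Nat.odd_iff.2 (Nat.odd_of_mod_four_eq_three hd4)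
    have hdz : d ∣ z := ((Nat.coprime_two_right.2 hd_odd).pow_right k).dvd_of_dvd_mul_left hd
    exact mod_four_ne_three_of_dvd_of_sq_add_sq_eq_sq hxyz (Nat.coprime_of_sq_add_sq_eq_sq hxyz hg)
      hdz hd4
end

section
/- Define γ(n,i) = γ⁺(n,i) − γ⁻(n,i) where γ⁺(n,i) counts divisors k of 2n with k(k + 2i + (-1)^(n+k+i))/2 = n and γ⁻(n,i) counts divisors k of 2n with k(k + 2i − (-1)^(n+k+i))/2 = n. Then all γ(n,i) for 0 ≤ i ≤ n are non-negative if and only if n = 2^k · z for some k ≥ 0 and some primitive Pythagorean triple (x, y, z). -/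
/-!
For `k` counted by `gammaMinus n i`, one of the two factors `k` and `k + 2i - (-1)^(n+k+i)` of
`2n` is odd, and the sign convention forces this odd factor of `n` to be `≡ 3 (mod 4)`;
conversely each divisor `d ≡ 3 (mod 4)` of `n` arises in this way for some `i ≤ n`. Both
counting conditions read `k (k + c) = 2n` with `c = 2i ± 1`, and monotonicity in `k` shows that
`gammaPlus n i` and `gammaMinus n i` are never both nonzero. So all `γ(n,i)` are nonnegative
exactly when no prime factor of `n` is `≡ 3 (mod 4)`.

This is also what characterises `2^k` times a primitive hypotenuse `z`: `z² = x² + y²` with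
`x, y` coprime makes `-1` a square modulo `z`. Conversely an odd `z` all of whose prime
factors are `≡ 1 (mod 4)` is a sum `a² + b²` of coprime squares, built one prime `p = u² + v²`
at a time from one of the Gaussian products `(a + bi)(u ± vi)`, and `(a² - b², 2ab, a² + b²)`
is then primitive.
-/

theorem Nat.mod_four_ne_three_of_forall_mem_primeFactors {d : ℕ}
    (h : ∀ p ∈ d.primeFactors, p % 4 ≠ 3) : d % 4 ≠ 3 := by
  induction d using induction_on_primes with
  | zero => decide
  | one => decide
  | prime_mul p a hp ih =>
    rcases eq_or_ne a 0 with rfl | ha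
    · simp
    have hpa : (p * a).primeFactors = p.primeFactors ∪ a.primeFactors :=
      Nat.primeFactors_mul hp.ne_zero ha
    have hp4 : p % 4 ≠ 3 := h p (by simp [hpa, hp])
    have ha4 : a % 4 ≠ 3 := ih fun q hq => h q (by simp [hpa, hq])
    have key : ∀ x y : ZMod 4, x ≠ 3 → y ≠ 3 → x * y ≠ 3 := by decide
    rw [show 3 = 3 % 4 by simp, Ne, ← ZMod.natCast_eq_natCast_iff'] at hp4 ha4 ⊢
    push_cast
    exact key _ _ hp4 ha4

theorem prime_dvd_of_not_isCoprime_mul_add_mul {p u v a b : ℤ} (hp : Prime p)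
    (huv : u ^ 2 + v ^ 2 = p) (hab : IsCoprime a b)
    (h : ¬IsCoprime (a * u - b * v) (a * v + b * u)) :
    p ∣ a * u - b * v ∧ p ∣ a * v + b * u := by
  by_cases h0 : a * u - b * v = 0 ∧ a * v + b * u = 0
  · simp [h0]
  obtain ⟨q, hq, hqc, hqd⟩ : ∃ q, Prime q ∧ q ∣ a * u - b * v ∧ q ∣ a * v + b * u := by
    by_contra! H
    exact h (isCoprime_of_prime_dvd h0 H)
  -- `(c, d) = (a + b i) (u + v i)`, so `(a + b i) p = (c + d i) (u - v i)`.
  have hqap : q ∣ a * p := by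
    rw [← huv, show a * (u ^ 2 + v ^ 2) = (a * u - b * v) * u + (a * v + b * u) * v by ring]
    exact dvd_add (hqc.mul_right u) (hqd.mul_right v)
  have hqbp : q ∣ b * p := by
    rw [← huv, show b * (u ^ 2 + v ^ 2) = (a * v + b * u) * u - (a * u - b * v) * v by ring]
    exact dvd_sub (hqd.mul_right u) (hqc.mul_right v)
  have hqp : q ∣ p := by
    by_contra hqp
    exact hq.not_isUnit (hab.isUnit_of_dvd' ((hq.dvd_mul.mp hqap).resolve_right hqp)
      ((hq.dvd_mul.mp hqbp).resolve_right hqp))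
  have hpq : p ∣ q := (hq.associated_of_dvd hp hqp).symm.dvd
  exact ⟨hpq.trans hqc, hpq.trans hqd⟩

theorem Prime.not_dvd_of_sq_add_sq_eq {p u v : ℤ} (hp : Prime p) (huv : u ^ 2 + v ^ 2 = p) :
    ¬p ∣ u := by
  intro hu
  have hv : p ∣ v := hp.dvd_of_dvd_pow (n := 2) <| by
    rw [show v ^ 2 = p - u ^ 2 by linarith]
    exact dvd_sub dvd_rfl (dvd_pow hu two_ne_zero)
  have hpp : p * p ∣ p * 1 := by
    have := dvd_add (pow_dvd_pow_of_dvd hu 2) (pow_dvd_pow_of_dvd hv 2)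
    rw [mul_one]
    rwa [huv, sq] at this
  exact hp.not_isUnit (isUnit_of_dvd_one ((mul_dvd_mul_iff_left hp.ne_zero).mp hpp))

theorem exists_isCoprime_sq_add_sq_eq_mul {p u v a b : ℤ} (hp : Prime p) (hp2 : ¬p ∣ 2)
    (huv : u ^ 2 + v ^ 2 = p) (hab : IsCoprime a b) :
    ∃ c d, IsCoprime c d ∧ c ^ 2 + d ^ 2 = p * (a ^ 2 + b ^ 2) := by
  -- Otherwise `p` divides both parts of both products `(a + b i) (u ± v i)`, so `p ∣ 2au, 2bu`.
  by_contra! H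
  have h₁ := prime_dvd_of_not_isCoprime_mul_add_mul hp huv hab
    fun hc => H _ _ hc (by rw [← huv]; ring)
  have h₂ := prime_dvd_of_not_isCoprime_mul_add_mul hp (u := u) (v := -v) (by rwa [neg_sq]) hab
    fun hc => H _ _ hc (by rw [← huv]; ring)
  have hu := hp.not_dvd_of_sq_add_sq_eq huv
  have cancel : ∀ x, p ∣ 2 * x * u → p ∣ x := fun x hx =>
    (hp.dvd_or_dvd ((hp.dvd_or_dvd hx).resolve_right hu)).resolve_left hp2
  have ha : p ∣ a := cancel a <| by
    rw [show 2 * a * u = (a * u - b * v) + (a * u - b * -v) by ring]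
    exact dvd_add h₁.1 h₂.1
  have hb : p ∣ b := cancel b <| by
    rw [show 2 * b * u = (a * v + b * u) + (a * -v + b * u) by ring]
    exact dvd_add h₁.2 h₂.2
  exact hp.not_isUnit (hab.isUnit_of_dvd' ha hb)

theorem exists_isCoprime_sq_add_sq_eq {z : ℕ} (hz : Odd z)
    (h : ∀ p ∈ z.primeFactors, p % 4 ≠ 3) : ∃ a b : ℤ, IsCoprime a b ∧ a ^ 2 + b ^ 2 = z := by
  induction z using induction_on_primes with
  | zero => exact absurd hz (by decide)
  | one => exact ⟨1, 0, isCoprime_one_left, by norm_num⟩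
  | prime_mul p z hp ih =>
    have hz0 : z ≠ 0 := by rintro rfl; simp at hz
    have hpz := Nat.primeFactors_mul hp.ne_zero hz0
    obtain ⟨a, b, hab, habz⟩ :=
      ih (Nat.Odd.of_mul_right hz) fun q hq => h q (by simp [hpz, hq])
    have : Fact p.Prime := ⟨hp⟩
    obtain ⟨u, v, huv⟩ := Nat.Prime.sq_add_sq (h p (by simp [hpz, hp]))
    have hp2 : ¬(p : ℤ) ∣ 2 := by
      norm_cast
      rw [Nat.prime_dvd_prime_iff_eq hp Nat.prime_two]
      rintro rfl
      exact absurd (Nat.Odd.of_mul_left hz) (by decide)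
    obtain ⟨c, d, hcd, hcdp⟩ := exists_isCoprime_sq_add_sq_eq_mul
      (Nat.prime_iff_prime_int.mp hp) hp2 (u := u) (v := v) (by exact_mod_cast huv) hab
    exact ⟨c, d, hcd, by rw [hcdp, habz]; push_cast; ring⟩

theorem exists_sq_add_sq_eq_sq_of_isCoprime {z : ℕ} (hz : Odd z) {a b : ℤ}
    (hab : IsCoprime a b) (h : a ^ 2 + b ^ 2 = z) :
    ∃ x y : ℕ, x ^ 2 + y ^ 2 = z ^ 2 ∧ x.gcd y = 1 := by
  have hodd : Odd (a ^ 2 + b ^ 2) := by rw [h]; exact_mod_cast hz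
  have hpar : a % 2 = 0 ∧ b % 2 = 1 ∨ a % 2 = 1 ∧ b % 2 = 0 := by
    rw [Int.odd_add, Int.odd_pow' two_ne_zero, Int.even_pow' two_ne_zero, Int.odd_iff,
      Int.even_iff] at hodd
    omega
  obtain ⟨-, hxy⟩ := PythagoreanTriple.coprime_classification.mpr
    ⟨a, b, Or.inl ⟨rfl, rfl⟩, Or.inl rfl, Int.isCoprime_iff_gcd_eq_one.mp hab, hpar⟩
  refine ⟨(a ^ 2 - b ^ 2).natAbs, (2 * a * b).natAbs, ?_, by rwa [Int.gcd_eq_natAbs] at hxy⟩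
  zify
  simp only [sq_abs, ← h]
  ring

theorem mod_four_ne_three_of_mem_primeFactors_of_sq_add_sq {x y z p : ℕ}
    (h : x ^ 2 + y ^ 2 = z ^ 2) (hg : (x.gcd y).gcd z = 1) (hp : p ∈ z.primeFactors) :
    p % 4 ≠ 3 := by
  have hgz : x.gcd y ∣ z := (Nat.pow_dvd_pow_iff two_ne_zero).mp <| h ▸
    dvd_add (pow_dvd_pow_of_dvd (Nat.gcd_dvd_left x y) 2)
      (pow_dvd_pow_of_dvd (Nat.gcd_dvd_right x y) 2)
  have hxy : x.Coprime y := Nat.dvd_one.mp (hg ▸ Nat.dvd_gcd dvd_rfl hgz)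
  exact Nat.mod_four_ne_three_of_mem_primeFactors_of_isSquare_neg_one hp <|
    ZMod.isSquare_neg_one_of_dvd (dvd_pow_self z two_ne_zero)
      (ZMod.isSquare_neg_one_of_eq_sq_add_sq_of_coprime h.symm hxy)

theorem exists_two_pow_mul_primitive_hypotenuse_iff {n : ℕ} (hn : n ≠ 0) :
    (∃ k x y z : ℕ, x ^ 2 + y ^ 2 = z ^ 2 ∧ (x.gcd y).gcd z = 1 ∧ n = 2 ^ k * z) ↔
      ∀ p ∈ n.primeFactors, p % 4 ≠ 3 := by
  constructor
  · rintro ⟨k, x, y, z, h, hg, rfl⟩ p hp hp4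
    have hpz : p ∣ z := (Nat.Coprime.pow_right k (Nat.coprime_two_right.mpr
      (Nat.odd_iff.mpr (Nat.odd_of_mod_four_eq_three hp4)))).dvd_of_dvd_mul_left
        (Nat.dvd_of_mem_primeFactors hp)
    exact mod_four_ne_three_of_mem_primeFactors_of_sq_add_sq h hg
      (Nat.mem_primeFactors.mpr ⟨Nat.prime_of_mem_primeFactors hp, hpz, right_ne_zero_of_mul hn⟩)
      hp4
  · intro h
    obtain ⟨k, z, hz, rfl⟩ := Nat.exists_eq_two_pow_mul_odd hn
    obtain ⟨a, b, hab, habz⟩ := exists_isCoprime_sq_add_sq_eq hz fun p hp =>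
      h p (Nat.primeFactors_mono (Dvd.intro_left _ rfl) hn hp)
    obtain ⟨x, y, hxy, hg⟩ := exists_sq_add_sq_eq_sq_of_isCoprime hz hab habz
    exact ⟨k, x, y, z, hxy, by rw [hg, Nat.gcd_one_left], rfl⟩

theorem neg_one_pow_and_mod_two_cases (m : ℕ) :
    (-1 : ℤ) ^ m = 1 ∧ m % 2 = 0 ∨ (-1 : ℤ) ^ m = -1 ∧ m % 2 = 1 := by
  rcases Nat.even_or_odd m with h | h
  · exact Or.inl ⟨h.neg_one_pow, Nat.even_iff.mp h⟩
  · exact Or.inr ⟨h.neg_one_pow, Nat.odd_iff.mp h⟩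

theorem eq_of_mul_add_eq_mul_add_s12 {k k' c : ℤ} (hk : 0 < k) (hk' : 0 < k') (hc : -1 ≤ c)
    (h : k * (k + c) = k' * (k' + c)) : k = k' := by
  have : (k - k') * (k + k' + c) = 0 := by linear_combination h
  rcases mul_eq_zero.mp this with h | h <;> omega

theorem eq_add_one_of_mul_add_one_eq_mul_sub_one {k k' t : ℤ} (hk : 0 < k) (hk' : 0 < k')
    (ht : 0 ≤ t) (h : k * (k + t + 1) = k' * (k' + t - 1)) : k' = k + 1 := by
  have h₁ : k < k' := by nlinarith
  have h₂ : k' < k + 2 := by nlinarith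
  omega

theorem not_gammaPlus_cond_and_gammaMinus_cond {n i k k' : ℕ} (hk : 0 < k) (hk' : 0 < k')
    (h : (k : ℤ) * (k + 2 * i + (-1) ^ (n + k + i)) = 2 * n)
    (h' : (k' : ℤ) * (k' + 2 * i - (-1) ^ (n + k' + i)) = 2 * n) : False := by
  -- With equal signs `k' = k + 1` or `k = k' + 1`, with opposite signs `k = k'`; both clash with
  -- the parities of `n + k + i` and `n + k' + i`.
  rcases neg_one_pow_and_mod_two_cases (n + k + i) with ⟨he, hm⟩ | ⟨he, hm⟩ <;>
  rcases neg_one_pow_and_mod_two_cases (n + k' + i) with ⟨he', hm'⟩ | ⟨he', hm'⟩ <;>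
  rw [he] at h <;> rw [he'] at h'
  · have := eq_add_one_of_mul_add_one_eq_mul_sub_one (k := k) (k' := k') (t := 2 * i) (by omega)
      (by omega) (by omega) (by linear_combination h - h')
    omega
  · have := eq_of_mul_add_eq_mul_add_s12 (k := k) (k' := k') (c := 2 * i + 1) (by omega) (by omega)
      (by omega) (by linear_combination h - h')
    omega
  · have := eq_of_mul_add_eq_mul_add_s12 (k := k) (k' := k') (c := 2 * i - 1) (by omega) (by omega)
      (by omega) (by linear_combination h - h')
    omega
  · have := eq_add_one_of_mul_add_one_eq_mul_sub_one (k := k') (k' := k) (t := 2 * i) (by omega)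
      (by omega) (by omega) (by linear_combination h' - h)
    omega

theorem gammaPlus_eq_zero_or_gammaMinus_eq_zero (n i : ℕ) :
    gammaPlus n i = 0 ∨ gammaMinus n i = 0 := by
  by_contra! H
  obtain ⟨k, hk⟩ := Finset.card_ne_zero.mp H.1
  obtain ⟨k', hk'⟩ := Finset.card_ne_zero.mp H.2
  rw [Finset.mem_filter] at hk hk'
  exact not_gammaPlus_cond_and_gammaMinus_cond (Nat.pos_of_mem_divisors hk.1)
    (Nat.pos_of_mem_divisors hk'.1) hk.2 hk'.2

theorem exists_dvd_mod_four_eq_three_of_gammaMinus_cond {n i k : ℕ} (hk : 0 < k)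
    (h : (k : ℤ) * (k + 2 * i - (-1) ^ (n + k + i)) = 2 * n) : ∃ d, d ∣ n ∧ d % 4 = 3 := by
  have hε := neg_one_pow_and_mod_two_cases (n + k + i)
  generalize (-1 : ℤ) ^ (n + k + i) = ε at h hε
  rcases Nat.even_or_odd' k with ⟨g, rfl | rfl⟩
  · obtain ⟨m, hm⟩ : ∃ m : ℕ, (2 * g + 2 * i - ε : ℤ) = 2 * m + 1 :=
      ⟨((2 * g + 2 * i - ε - 1) / 2).toNat, by omega⟩
    have hn : n = g * (2 * m + 1) := by
      have : (n : ℤ) = g * (2 * m + 1) := by rw [← hm]; push_cast at h; linarith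
      exact_mod_cast this
    refine ⟨2 * m + 1, Dvd.intro_left g hn.symm, ?_⟩
    have : n = 2 * (g * m) + g := by rw [hn]; ring
    omega
  · obtain ⟨m, hm⟩ : ∃ m : ℕ, (2 * g + 1 + 2 * i - ε : ℤ) = 2 * m :=
      ⟨((2 * g + 1 + 2 * i - ε) / 2).toNat, by omega⟩
    have hn : n = (2 * g + 1) * m := by
      have : (n : ℤ) = (2 * g + 1) * m := by
        have : (2 * g + 1 : ℤ) * (2 * m) = 2 * n := by rw [← hm]; push_cast at h; linarith
        linarith
      exact_mod_cast this
    refine ⟨2 * g + 1, Dvd.intro m hn.symm, ?_⟩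
    have : n = 2 * (g * m) + m := by rw [hn]; ring
    omega

theorem gammaMinus_ne_zero_of_mul_eq {n i k : ℕ} (hk : 0 < k) (hodd : (n + k + i) % 2 = 1)
    (h : k * (k + 2 * i + 1) = 2 * n) : gammaMinus n i ≠ 0 := by
  rw [gammaMinus, Finset.card_ne_zero]
  refine ⟨k, Finset.mem_filter.mpr ⟨Nat.mem_divisors.mpr ⟨Dvd.intro _ h, ?_⟩, ?_⟩⟩
  · rw [← h]; positivity
  · rw [(Nat.odd_iff.mpr hodd).neg_one_pow, sub_neg_eq_add]
    exact_mod_cast h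

theorem exists_gammaMinus_ne_zero {n d : ℕ} (hn : n ≠ 0) (hd : d ∣ n) (hd4 : d % 4 = 3) :
    ∃ i ≤ n, gammaMinus n i ≠ 0 := by
  obtain ⟨f, rfl⟩ := hd
  obtain ⟨e, rfl⟩ : ∃ e, d = 4 * e + 3 := ⟨d / 4, by omega⟩
  have hf : 0 < f := Nat.pos_of_ne_zero (right_ne_zero_of_mul hn)
  have hexp : (4 * e + 3) * f = 4 * (e * f) + 3 * f := by ring
  have hdn : 4 * e + 3 ≤ (4 * e + 3) * f := Nat.le_mul_of_pos_right _ hf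
  -- `k` is the smaller of `d` and `2f`, and `k + 2i + 1` the larger.
  rcases lt_or_gt_of_ne (show 4 * e + 3 ≠ 2 * f by omega) with hlt | hgt
  · refine ⟨f - (2 * e + 2), by omega, gammaMinus_ne_zero_of_mul_eq (k := 4 * e + 3) (by omega)
      (by omega) ?_⟩
    rw [show 4 * e + 3 + 2 * (f - (2 * e + 2)) + 1 = 2 * f by omega]
    ring
  · refine ⟨2 * e + 1 - f, by omega, gammaMinus_ne_zero_of_mul_eq (k := 2 * f) (by omega)
      (by omega) ?_⟩
    rw [show 2 * f + 2 * (2 * e + 1 - f) + 1 = 4 * e + 3 by omega]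
    ring

theorem gammaMinus_eq_zero {n : ℕ} (h : ∀ p ∈ n.primeFactors, p % 4 ≠ 3) (i : ℕ) :
    gammaMinus n i = 0 := by
  rw [gammaMinus, Finset.card_eq_zero, Finset.filter_eq_empty_iff]
  intro k hk hkeq
  obtain ⟨d, hdn, hd4⟩ :=
    exists_dvd_mod_four_eq_three_of_gammaMinus_cond (Nat.pos_of_mem_divisors hk) hkeq
  have hn : n ≠ 0 := by rintro rfl; simp at hk
  exact Nat.mod_four_ne_three_of_forall_mem_primeFactors
    (fun p hp => h p (Nat.primeFactors_mono hdn hn hp)) hd4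

theorem gamma_nonneg_iff {n : ℕ} (hn : n ≠ 0) :
    (∀ i : ℕ, i ≤ n → 0 ≤ (gammaPlus n i : ℤ) - (gammaMinus n i : ℤ)) ↔
      ∀ p ∈ n.primeFactors, p % 4 ≠ 3 := by
  constructor
  · intro h p hp hp4
    obtain ⟨i, hi, hne⟩ := exists_gammaMinus_ne_zero hn (Nat.dvd_of_mem_primeFactors hp) hp4
    have := h i hi
    rcases gammaPlus_eq_zero_or_gammaMinus_eq_zero n i with h0 | h0 <;> omega
  · intro h i _
    simp [gammaMinus_eq_zero h]

theorem stmt12 (n : ℕ) (hn : 0 < n) :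
    (∀ i : ℕ, i ≤ n → 0 ≤ (gammaPlus n i : ℤ) - (gammaMinus n i : ℤ)) ↔
      (∃ (k x y z : ℕ), x ^ 2 + y ^ 2 = z ^ 2 ∧ Nat.gcd (Nat.gcd x y) z = 1 ∧
        n = 2 ^ k * z) :=
  (gamma_nonneg_iff hn.ne').trans (exists_two_pow_mul_primitive_hypotenuse_iff hn.ne').symm
end
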